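/- Let F be a fusion system on a finite p-group S, and let α₁, …, α_n ∈ Aut_F(S) be a complete set of representatives of the cosets of Inn(S) in Aut_F(S) (i.e., of Out_F(S)). Set Y₀ equal to the disjoint union of the S-S-bisets S×_{(S,α_i)}S for i = 1, …, n. Then for every φ ∈ Aut_F(S), the S-S-bisets _φ Y₀ (left S-action twisted by φ, i.e., s·y = φ(s)y) and Y₀ are isomorphic; in particular Y₀ is left F-stable at S. -/

import Mathlib

/-- The conjugation homomorphism `c_s : P → Q`, `u ↦ s u s⁻¹`,
for subgroups `P, Q` of `S` with `s P s⁻¹ ≤ Q`. -/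
def conjHom {S : Type} [Group S] (P Q : Subgroup S) (s : S)
    (h : ∀ p ∈ P, s * p * s⁻¹ ∈ Q) : ↥P →* ↥Q where
  toFun p := ⟨s * (p : S) * s⁻¹, h p p.2⟩
  map_one' := by ext; simp
  map_mul' a b := by ext; push_cast; group

/-- A fusion system on a group `S`: for each pair of subgroups `P, Q` of `S` a set
of injective group homomorphisms `P → Q`, containing all conjugation maps induced by
elements of `S`, closed under composition, and such that every morphism, corestricted
to an isomorphism onto its image, lies in the system together with its inverse. -/
structure FusionSystem (S : Type) [Group S] where
  Hom : ∀ P Q : Subgroup S, Set (↥P →* ↥Q)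
  inj : ∀ {P Q : Subgroup S} {φ : ↥P →* ↥Q}, φ ∈ Hom P Q → Function.Injective φ
  conj_mem : ∀ (P Q : Subgroup S) (s : S) (h : ∀ p ∈ P, s * p * s⁻¹ ∈ Q),
    conjHom P Q s h ∈ Hom P Q
  comp_mem : ∀ {P Q R : Subgroup S} {φ : ↥P →* ↥Q} {ψ : ↥Q →* ↥R},
    φ ∈ Hom P Q → ψ ∈ Hom Q R → ψ.comp φ ∈ Hom P R
  restrict_mem : ∀ {P Q : Subgroup S} {φ : ↥P →* ↥Q}, φ ∈ Hom P Q →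
    ∃ ψ ∈ Hom P (Subgroup.map Q.subtype φ.range),
      ∃ χ ∈ Hom (Subgroup.map Q.subtype φ.range) P,
        (∀ u : ↥P, ((ψ u : S)) = ((φ u : ↥Q) : S)) ∧
        (∀ u, χ (ψ u) = u) ∧ (∀ v, ψ (χ v) = v)

/-- Two subgroups are `F`-conjugate if there is an isomorphism between them in `F`. -/
def FConj {S : Type} [Group S] (F : FusionSystem S) (P P' : Subgroup S) : Prop :=
  ∃ φ ∈ F.Hom P P', Function.Bijective φ

/-- An `S`-`S`-biset: a set with commuting left and right `S`-actions. -/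
structure Biset (S : Type) [Group S] where
  X : Type
  l : S → X → X
  r : X → S → X
  l_one : ∀ x, l 1 x = x
  l_mul : ∀ s t x, l (s * t) x = l s (l t x)
  r_one : ∀ x, r x 1 = x
  r_mul : ∀ x s t, r x (s * t) = r (r x s) t
  lr_comm : ∀ s x t, l s (r x t) = r (l s x) t

/-- The relation on `S × S` generated by `(xq, y) ∼ (x, φ(q)y)` for `q ∈ Q`. -/
def amalgRel {S : Type} [Group S] (Q : Subgroup S) (φ : ↥Q →* S) :
    S × S → S × S → Prop :=
  fun a b => ∃ q : Q, a.1 = b.1 * q ∧ b.2 = φ q * a.2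

/-- The `S`-`S`-biset `S ×_{(Q,φ)} S`. -/
def amalgBiset {S : Type} [Group S] (Q : Subgroup S) (φ : ↥Q →* S) : Biset S where
  X := Quot (amalgRel Q φ)
  l s := Quot.map (fun a => (s * a.1, a.2))
    (by rintro a b ⟨q, h1, h2⟩; exact ⟨q, by simp only []; rw [h1, mul_assoc], h2⟩)
  r x t := Quot.map (fun a => (a.1, a.2 * t))
    (by rintro a b ⟨q, h1, h2⟩; exact ⟨q, h1, by simp only []; rw [h2, mul_assoc]⟩) x
  l_one := by rintro ⟨a⟩; simp [Quot.map]
  l_mul := by rintro s t ⟨a⟩; simp [Quot.map, mul_assoc]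
  r_one := by rintro ⟨a⟩; simp [Quot.map]
  r_mul := by rintro ⟨a⟩ s t; simp [Quot.map, mul_assoc]
  lr_comm := by rintro s ⟨a⟩ t; simp [Quot.map]

/-- An injective map of `S`-`S`-bisets from `A` into `B` (a copy of `A` as a subbiset of `B`). -/
def ContainsCopy {S : Type} [Group S] (A B : Biset S) : Prop :=
  ∃ e : A.X → B.X, Function.Injective e ∧
    (∀ s z, e (A.l s z) = B.l s (e z)) ∧ (∀ z t, e (A.r z t) = B.r (e z) t)

/-- An isomorphism of `S`-`S`-bisets from `A` onto the subset `O` of `B`. -/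
def CopyOnto {S : Type} [Group S] (A B : Biset S) (O : Set B.X) : Prop :=
  ∃ e : A.X → B.X, Function.Injective e ∧ Set.range e = O ∧
    (∀ s z, e (A.l s z) = B.l s (e z)) ∧ (∀ z t, e (A.r z t) = B.r (e z) t)

/-- `X` is `F`-generated: every transitive subbiset (i.e. every `S`-`S`-orbit) of `X`
is isomorphic to `S ×_{(Q,φ)} S` for some `Q ≤ S` and `φ ∈ Hom_F(Q, S)`. -/
def FGenerated {S : Type} [Group S] (F : FusionSystem S) (B : Biset S) : Prop :=
  ∀ x : B.X, ∃ (Q : Subgroup S) (φ : ↥Q →* ↥(⊤ : Subgroup S)), φ ∈ F.Hom Q ⊤ ∧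
    CopyOnto (amalgBiset Q ((Subgroup.subtype ⊤).comp φ)) B
      {y | ∃ s t : S, y = B.l s (B.r x t)}

/-- `X` is left `F`-stable: for every `Q ≤ S` and `φ ∈ Hom_F(Q, S)`, the `Q`-`S`-bisets
`_Q X` and `_φ X` are isomorphic. -/
def LeftFStable {S : Type} [Group S] (F : FusionSystem S) (B : Biset S) : Prop :=
  ∀ (Q : Subgroup S) (φ : ↥Q →* ↥(⊤ : Subgroup S)), φ ∈ F.Hom Q ⊤ →
    ∃ e : B.X ≃ B.X,
      (∀ (q : ↥Q) (x : B.X), e (B.l (q : S) x) = B.l ((φ q : ↥(⊤ : Subgroup S)) : S) (e x)) ∧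
      (∀ (x : B.X) (s : S), e (B.r x s) = B.r (e x) s)

/-- A left semicharacteristic biset for `F`: a finite `S`-`S`-biset which is
`F`-generated and left `F`-stable. -/
def IsLeftSemicharacteristic {S : Type} [Group S] (F : FusionSystem S) (B : Biset S) : Prop :=
  Finite B.X ∧ FGenerated F B ∧ LeftFStable F B

/-- The group of automorphisms of `X` as a right `S`-set: all bijections `f : X → X`
with `f (x s) = f x · s`. -/
def rEquivGroup {S : Type} [Group S] (B : Biset S) : Subgroup (Equiv.Perm B.X) where
  carrier := {f | ∀ x s, f (B.r x s) = B.r (f x) s}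
  one_mem' := fun _ _ => rfl
  mul_mem' := by
    intro f g hf hg x s
    simp only [Equiv.Perm.mul_apply, hg x s, hf (g x) s]
  inv_mem' := by
    intro f hf x s
    apply f.injective
    rw [hf, Equiv.Perm.inv_def, Equiv.apply_symm_apply, Equiv.apply_symm_apply]

/-- The virtual fixed-point count `|X^P|` of a virtual `S`-set given by the formal
sum `Σ_H (c H) · S/H`. -/
noncomputable def fixedCount {S : Type} [Group S] (c : Subgroup S → ℚ) (P : Subgroup S) : ℚ :=
  ∑ᶠ H : Subgroup S, c H * (Nat.card {x : S ⧸ H // ∀ p ∈ P, p • x = x} : ℚ)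

/-- Subgroups `P, Q` of `S` are `S`-conjugate. -/
def SConj {S : Type} [Group S] (P Q : Subgroup S) : Prop :=
  ∃ g : S, Q = Subgroup.map (MulAut.conj g).toMonoidHom P

/-- An isomorphism of `S`-`S`-bisets. -/
def BisetIso {S : Type} [Group S] (A B : Biset S) : Prop :=
  ∃ e : A.X ≃ B.X,
    (∀ s z, e (A.l s z) = B.l s (e z)) ∧ (∀ z t, e (A.r z t) = B.r (e z) t)

/-- Disjoint union of a family of `S`-`S`-bisets. -/
def sigmaBiset {S : Type} [Group S] {ι : Type} (B : ι → Biset S) : Biset S where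
  X := Σ i : ι, (B i).X
  l s x := ⟨x.1, (B x.1).l s x.2⟩
  r x t := ⟨x.1, (B x.1).r x.2 t⟩
  l_one := by rintro ⟨i, x⟩; simp [(B i).l_one]
  l_mul := by rintro s t ⟨i, x⟩; simp [(B i).l_mul]
  r_one := by rintro ⟨i, x⟩; simp [(B i).r_one]
  r_mul := by rintro ⟨i, x⟩ s t; simp [(B i).r_mul]
  lr_comm := by rintro s ⟨i, x⟩ t; simp [(B i).lr_comm]

/-- The biset `S ×_{(S,α)} S` for an endomorphism `α` of `S` (with `Q = S`). -/
def fullAmalg (S : Type) [Group S] (α : S →* S) : Biset S :=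
  amalgBiset ⊤ (α.comp (Subgroup.subtype ⊤))

/-- `Y₀ = ∐ᵢ S ×_{(S,αᵢ)} S` for a family of morphisms `αᵢ ∈ Hom_F(S,S)`. -/
def diagUnion (S : Type) [Group S] {n : ℕ}
    (α : Fin n → (↥(⊤ : Subgroup S) →* ↥(⊤ : Subgroup S))) : Biset S :=
  sigmaBiset (fun i => amalgBiset ⊤ ((Subgroup.subtype ⊤).comp (α i)))

/-! Since `S ×_{(S,γ)} S ≅ S` via `[x, y] ↦ γ(x) y`, twisting the left action of the summand of
`Y₀` indexed by `i` by `φ` gives the biset of `αᵢ ∘ φ ∈ Aut_F(S)`. This automorphism is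
`c_{sᵢ} ∘ α_{σ i}` for some `sᵢ ∈ S` and index `σ i`, and left multiplication by `sᵢ⁻¹` identifies
the two summands. As `φ` is surjective and the `αᵢ` are pairwise non-conjugate, `σ` is injective,
hence a permutation of the finite index set, and the summand isomorphisms assemble along `σ`. -/

section LeftTwist

variable {S : Type} [Group S]

/-- `_θ A ≅ B`: an isomorphism of `S`-`S`-bisets from `A`, with left action twisted by `θ`,
onto `B`. -/
def LeftTwistIso (θ : S → S) (A B : Biset S) : Prop :=
  ∃ e : A.X ≃ B.X,
    (∀ s z, e (A.l (θ s) z) = B.l s (e z)) ∧ (∀ z t, e (A.r z t) = B.r (e z) t)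

theorem sigmaBiset_leftTwistIso {ι : Type} {B : ι → Biset S} {θ : S → S} (σ : ι ≃ ι)
    (h : ∀ i, LeftTwistIso θ (B i) (B (σ i))) :
    LeftTwistIso θ (sigmaBiset B) (sigmaBiset B) := by
  choose f hl hr using h
  refine ⟨Equiv.sigmaCongr σ f, ?_, ?_⟩
  · rintro s ⟨i, z⟩
    exact Sigma.ext rfl (heq_of_eq (hl i s z))
  · rintro ⟨i, z⟩ t
    exact Sigma.ext rfl (heq_of_eq (hr i z t))

def amalgTopEquiv (γ : ↥(⊤ : Subgroup S) →* S) : (amalgBiset ⊤ γ).X ≃ S where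
  toFun := Quot.lift (fun a => γ ⟨a.1, Subgroup.mem_top _⟩ * a.2) (by
    rintro ⟨x, y⟩ ⟨x', y'⟩ ⟨q, hx, hy⟩
    dsimp only at hx hy
    subst hx hy
    change γ (⟨x', Subgroup.mem_top x'⟩ * q) * y = γ ⟨x', Subgroup.mem_top x'⟩ * (γ q * y)
    rw [map_mul, mul_assoc])
  invFun y := Quot.mk _ (1, y)
  left_inv := by
    rintro ⟨x, y⟩
    exact (Quot.sound ⟨⟨x, Subgroup.mem_top _⟩, (one_mul x).symm, rfl⟩).symm
  right_inv y := by
    change γ 1 * y = y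
    rw [map_one, one_mul]

theorem amalgTopEquiv_l (γ : ↥(⊤ : Subgroup S) →* S) (s : S) (z : (amalgBiset ⊤ γ).X) :
    amalgTopEquiv γ ((amalgBiset ⊤ γ).l s z) = γ ⟨s, Subgroup.mem_top s⟩ * amalgTopEquiv γ z := by
  obtain ⟨x, y⟩ := z
  change γ (⟨s, Subgroup.mem_top s⟩ * ⟨x, Subgroup.mem_top x⟩) * y =
    γ ⟨s, Subgroup.mem_top s⟩ * (γ ⟨x, Subgroup.mem_top x⟩ * y)
  rw [map_mul, mul_assoc]

theorem amalgTopEquiv_r (γ : ↥(⊤ : Subgroup S) →* S) (z : (amalgBiset ⊤ γ).X) (t : S) :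
    amalgTopEquiv γ ((amalgBiset ⊤ γ).r z t) = amalgTopEquiv γ z * t := by
  obtain ⟨x, y⟩ := z
  exact (mul_assoc _ _ _).symm

theorem amalgBiset_top_leftTwistIso {γ δ : ↥(⊤ : Subgroup S) →* S}
    {θ : ↥(⊤ : Subgroup S) →* ↥(⊤ : Subgroup S)} (s : S)
    (h : ∀ x, γ (θ x) = s * δ x * s⁻¹) :
    LeftTwistIso (fun t => (θ ⟨t, Subgroup.mem_top t⟩ : S)) (amalgBiset ⊤ γ) (amalgBiset ⊤ δ) := by
  refine ⟨(amalgTopEquiv γ).trans ((Equiv.mulLeft s⁻¹).trans (amalgTopEquiv δ).symm), ?_, ?_⟩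
  · intro t z
    simp only [Equiv.trans_apply, Equiv.coe_mulLeft, Equiv.symm_apply_eq, amalgTopEquiv_l,
      Equiv.apply_symm_apply]
    change s⁻¹ * (γ (θ ⟨t, Subgroup.mem_top t⟩) * _) = _
    rw [h]
    group
  · intro z t
    simp only [Equiv.trans_apply, Equiv.coe_mulLeft, Equiv.symm_apply_eq, amalgTopEquiv_r,
      Equiv.apply_symm_apply, mul_assoc]

end LeftTwist

theorem injective_of_comp_conj {ι G H : Type} [Group G] [Group H] {β : ι → (G →* H)}
    {φ : G →* G} (hφ : Function.Surjective φ)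
    (hβ : ∀ i i', (∃ s, ∀ x, β i x = s * β i' x * s⁻¹) → i' = i)
    {j : ι → ι} {c : ι → H} (hc : ∀ i x, β i (φ x) = c i * β (j i) x * (c i)⁻¹) :
    Function.Injective j := by
  intro i₁ i₂ hj
  refine (hβ i₁ i₂ ⟨c i₁ * (c i₂)⁻¹, fun x => ?_⟩).symm
  obtain ⟨u, rfl⟩ := hφ x
  rw [hc i₁, hc i₂, hj]
  group

theorem diagUnion_left_stable_at_top_general
    (S : Type) [Group S]
    (F : FusionSystem S) (n : ℕ)
    (α : Fin n → (↥(⊤ : Subgroup S) →* ↥(⊤ : Subgroup S)))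
    (hα : ∀ i, α i ∈ F.Hom ⊤ ⊤) (hαbij : ∀ i, Function.Bijective (α i))
    (hrep : ∀ φ ∈ F.Hom (⊤ : Subgroup S) ⊤, Function.Bijective φ →
      ∃! i : Fin n, ∃ s : S, ∀ x : ↥(⊤ : Subgroup S),
        ((φ x : ↥(⊤ : Subgroup S)) : S) = s * ((α i x : ↥(⊤ : Subgroup S)) : S) * s⁻¹) :
    ∀ φ ∈ F.Hom (⊤ : Subgroup S) ⊤, Function.Bijective φ →
      ∃ e : (diagUnion S α).X ≃ (diagUnion S α).X,
        (∀ (s : S) (y : (diagUnion S α).X),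
          e ((diagUnion S α).l ((φ ⟨s, Subgroup.mem_top s⟩ : ↥(⊤ : Subgroup S)) : S) y) =
            (diagUnion S α).l s (e y)) ∧
        (∀ (y : (diagUnion S α).X) (t : S),
          e ((diagUnion S α).r y t) = (diagUnion S α).r (e y) t) := by
  intro φ hφ hφbij
  let β : Fin n → (↥(⊤ : Subgroup S) →* S) := fun i => (Subgroup.subtype ⊤).comp (α i)
  have hβ : ∀ i i', (∃ s, ∀ x, β i x = s * β i' x * s⁻¹) → i' = i := fun i i' hii' =>
    (hrep (α i) (hα i) (hαbij i)).unique hii' ⟨1, fun x => by group⟩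
  choose j c hc using fun i =>
    (hrep ((α i).comp φ) (F.comp_mem hφ (hα i)) ((hαbij i).comp hφbij)).exists
  have hj : Function.Bijective j :=
    Finite.injective_iff_bijective.mp (injective_of_comp_conj hφbij.2 hβ hc)
  exact sigmaBiset_leftTwistIso (Equiv.ofBijective j hj) fun i =>
    amalgBiset_top_leftTwistIso (c i) (hc i)

/-- For representatives `α₁, …, α_n` of `Out_F(S) = Aut_F(S)/Inn(S)`, the biset
`Y₀ = ∐ᵢ S ×_{(S,αᵢ)} S` satisfies `_φ Y₀ ≅ Y₀` for every `φ ∈ Aut_F(S)`;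
in particular `Y₀` is left `F`-stable at `S`. -/
theorem diagUnion_left_stable_at_top
    (p : ℕ) [Fact p.Prime] (S : Type) [Group S] [Fintype S] (hS : IsPGroup p S)
    (F : FusionSystem S) (n : ℕ)
    (α : Fin n → (↥(⊤ : Subgroup S) →* ↥(⊤ : Subgroup S)))
    (hα : ∀ i, α i ∈ F.Hom ⊤ ⊤) (hαbij : ∀ i, Function.Bijective (α i))
    (hrep : ∀ φ ∈ F.Hom (⊤ : Subgroup S) ⊤, Function.Bijective φ →
      ∃! i : Fin n, ∃ s : S, ∀ x : ↥(⊤ : Subgroup S),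
        ((φ x : ↥(⊤ : Subgroup S)) : S) = s * ((α i x : ↥(⊤ : Subgroup S)) : S) * s⁻¹) :
    ∀ φ ∈ F.Hom (⊤ : Subgroup S) ⊤, Function.Bijective φ →
      ∃ e : (diagUnion S α).X ≃ (diagUnion S α).X,
        (∀ (s : S) (y : (diagUnion S α).X),
          e ((diagUnion S α).l ((φ ⟨s, Subgroup.mem_top s⟩ : ↥(⊤ : Subgroup S)) : S) y) =
            (diagUnion S α).l s (e y)) ∧
        (∀ (y : (diagUnion S α).X) (t : S),
          e ((diagUnion S α).r y t) = (diagUnion S α).r (e y) t) :=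
  diagUnion_left_stable_at_top_general S F n α hα hαbij hrep
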